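/- Let S : ℝ^d → (0,1) and p : ℝ^d × ℝ^d → (0,∞) be measurable, with π̂(y | x) = p(y | x) · S(y) / S(x), and let 𝒟 be a probability measure on tuples ((x_t^w, x_{t-1}^w), (x_t^l, x_{t-1}^l)) ∈ (ℝ^d)^4 such that the map log S is measurable. Then for any β > 0, the DPO loss −𝔼_𝒟[ log σ( β log(π̂(x_{t-1}^w | x_t^w)/p(x_{t-1}^w | x_t^w)) − β log(π̂(x_{t-1}^l | x_t^l)/p(x_{t-1}^l | x_t^l)) ) ] equals the reference-free PC-Diffusion loss −𝔼_𝒟[ log σ( β log(S(x_{t-1}^w)/S(x_t^w)) − β log(S(x_{t-1}^l)/S(x_t^l)) ) ], where σ(z) = 1/(1+e^{−z}). In particular, the two expectations are equal whenever either one exists. -/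
import Mathlib

open MeasureTheory

noncomputable def logisticSigmoid (z : ℝ) : ℝ := 1 / (1 + Real.exp (-z))

/-- **Theorem 2 (expectation form): the DPO loss with policy `π̂(y|x) = p(y|x) S(y)/S(x)`
and reference `p` equals the reference-free PC-Diffusion loss.**
Tuples are `((x_t^w, x_{t-1}^w), (x_t^l, x_{t-1}^l))`. -/
theorem dpo_loss_eq_pc_diffusion_loss
    (d : ℕ) (hd : 1 ≤ d)
    (S : EuclideanSpace ℝ (Fin d) → ℝ)
    (hS_pos : ∀ x, 0 < S x) (hS_lt_one : ∀ x, S x < 1)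
    (hlogS_meas : Measurable fun x => Real.log (S x))
    (p : EuclideanSpace ℝ (Fin d) → EuclideanSpace ℝ (Fin d) → ℝ)
    (hp_pos : ∀ y x, 0 < p y x)
    (hp_meas : Measurable fun q : EuclideanSpace ℝ (Fin d) × EuclideanSpace ℝ (Fin d) =>
      p q.1 q.2)
    (pihat : EuclideanSpace ℝ (Fin d) → EuclideanSpace ℝ (Fin d) → ℝ)
    (hpihat : ∀ y x, pihat y x = p y x * S y / S x)
    (𝒟 : Measure ((EuclideanSpace ℝ (Fin d) × EuclideanSpace ℝ (Fin d)) ×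
      (EuclideanSpace ℝ (Fin d) × EuclideanSpace ℝ (Fin d)))) [IsProbabilityMeasure 𝒟]
    (β : ℝ) (hβ : 0 < β) :
    -(∫ t, Real.log (logisticSigmoid
        (β * Real.log (pihat t.1.2 t.1.1 / p t.1.2 t.1.1)
          - β * Real.log (pihat t.2.2 t.2.1 / p t.2.2 t.2.1))) ∂𝒟)
      = -(∫ t, Real.log (logisticSigmoid
        (β * Real.log (S t.1.2 / S t.1.1)
          - β * Real.log (S t.2.2 / S t.2.1))) ∂𝒟) := by
  have key : ∀ y x, pihat y x / p y x = S y / S x := by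
    intro y x
    rw [hpihat, div_right_comm, mul_comm (p y x) (S y), mul_div_assoc,
      div_self (hp_pos y x).ne', mul_one]
  congr 1
  apply integral_congr_ae
  filter_upwards with t
  rw [key, key]
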